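/- Expected-swap argument: let A be an allocation in which each agent i gets exactly w_i items (w_i positive integers), maximizing Σ_i v_i(A_i) among all such allocations of the same item set. Then every directed cycle C = (i_1,...,i_r) in the weighted envy graph of A has cost Σ_j (v_{i_j}(A_{i_{j+1}})/w_{i_{j+1}} − v_{i_j}(A_{i_j})/w_{i_j}) ≤ 0; consequently A is WEF-able. -/

import Mathlib

/-!
A cycle with a repeated agent splits into two shorter cycles, so it suffices to treat cycles
without repetition, i.e. cyclic permutations `π` of the agents. Let every agent `i` take an item
`f i` from the bundle of `π i` and give up the item taken from its own bundle. Bundle sizes and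
the set of allocated items are unchanged, so by maximality welfare does not increase. Averaging
over independent uniform choices of the `f i`, the expected change is
`∑ i, (v i (π i) - v (π i) (π i)) / w (π i)`, which is the cost of the cycle. Once no cycle has
positive cost, `s i = w i * M i`, with `M i` the largest cost of a simple path from `i`, is a
nonnegative subsidy vector making the allocation weighted-envy-free.
-/

/-- Sum of edge costs along the consecutive pairs of a list (a directed path). -/
noncomputable def pathCost {n : ℕ} (c : Fin n → Fin n → ℝ) (p : List (Fin n)) : ℝ :=
  ((p.zip p.tail).map fun q => c q.1 q.2).sum

/-- Sum of edge costs along a cycle `i₁,…,i_r,i₁`. -/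
noncomputable def cycleCost {n : ℕ} (c : Fin n → Fin n → ℝ) (p : List (Fin n)) : ℝ :=
  ((p.zip (p.rotate 1)).map fun q => c q.1 q.2).sum

/-- Weighted envy edge cost without subsidies. -/
noncomputable def envyCost {n : ℕ} (v : Fin n → Fin n → ℝ) (w : Fin n → ℝ) (i j : Fin n) : ℝ :=
  v i j / w j - v i i / w i

/-- Weighted envy edge cost with subsidy vector `s`. -/
noncomputable def envyCostS {n : ℕ} (v : Fin n → Fin n → ℝ) (w : Fin n → ℝ) (s : Fin n → ℝ)
    (i j : Fin n) : ℝ :=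
  (v i j + s j) / w j - (v i i + s i) / w i

/-- `(A,s)` is weighted-envy-free. -/
def IsWEF {n : ℕ} (v : Fin n → Fin n → ℝ) (w : Fin n → ℝ) (s : Fin n → ℝ) : Prop :=
  ∀ i j, (v i j + s j) / w j ≤ (v i i + s i) / w i

/-- The set of costs of (vertex-distinct) directed paths starting at `i`. -/
noncomputable def pathCostsFrom {n : ℕ} (c : Fin n → Fin n → ℝ) (i : Fin n) : Set ℝ :=
  {x | ∃ p : List (Fin n), p ≠ [] ∧ p.Nodup ∧ p.head? = some i ∧ pathCost c p = x}

open Finset Function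
open scoped BigOperators

namespace List

theorem exists_rotate_eq_cons_append_cons_of_not_nodup {α : Type*} {l : List α}
    (hl : ¬l.Nodup) : ∃ k a y z, l.rotate k = a :: (y ++ a :: z) := by
  obtain ⟨a, ha⟩ : ∃ a, [a, a] <+ l := by simpa [nodup_iff_sublist] using hl
  obtain ⟨r₁, r₂, rfl, har₁, har₂⟩ := cons_sublist_iff.1 ha
  obtain ⟨x, y, rfl⟩ := append_of_mem har₁
  obtain ⟨p, q, hpq⟩ := append_of_mem (show a ∈ y ++ r₂ ++ x by simp_all)
  exact ⟨x.length, a, p, q, by simp [← hpq]⟩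

end List

section Cycles

variable {n : ℕ} (c : Fin n → Fin n → ℝ)

theorem pathCost_cons_cons (a b : Fin n) (l : List (Fin n)) :
    pathCost c (a :: b :: l) = c a b + pathCost c (b :: l) := by
  simp [pathCost]

theorem pathCost_append_cons (xs : List (Fin n)) (y : Fin n) (ys : List (Fin n)) :
    pathCost c (xs ++ y :: ys) = pathCost c (xs ++ [y]) + pathCost c (y :: ys) := by
  induction xs with
  | nil => simp [pathCost]
  | cons x xs ih =>
    cases xs with
    | nil => simp [pathCost]
    | cons x' xs' =>
      simp only [List.cons_append] at ih ⊢
      rw [pathCost_cons_cons, pathCost_cons_cons, ih, add_assoc]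

theorem cycleCost_cons (a : Fin n) (l : List (Fin n)) :
    cycleCost c (a :: l) = pathCost c (a :: l ++ [a]) := by
  simpa [cycleCost, pathCost] using congrArg (fun p => (p.map fun q => c q.1 q.2).sum)
    (List.zip_append (l₁ := a :: l) (r₁ := [a]) (l₂ := l ++ [a]) (r₂ := []) (by simp)).symm

theorem cycleCost_eq_sum_zipWith (l : List (Fin n)) :
    cycleCost c l = (List.zipWith c l (l.rotate 1)).sum :=
  congrArg List.sum List.map_uncurry_zip_eq_zipWith

theorem cycleCost_rotate (l : List (Fin n)) (k : ℕ) :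
    cycleCost c (l.rotate k) = cycleCost c l := by
  rw [cycleCost_eq_sum_zipWith, cycleCost_eq_sum_zipWith, List.rotate_rotate, add_comm,
    ← List.rotate_rotate, ← List.zipWith_rotate_distrib _ _ _ _ (by simp)]
  exact (List.rotate_perm _ _).sum_eq

theorem cycleCost_cons_append_cons (a : Fin n) (y z : List (Fin n)) :
    cycleCost c (a :: (y ++ a :: z)) = cycleCost c (a :: y) + cycleCost c (a :: z) := by
  rw [cycleCost_cons, cycleCost_cons, cycleCost_cons,
    show a :: (y ++ a :: z) ++ [a] = a :: y ++ a :: (z ++ [a]) by simp, pathCost_append_cons]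
  rfl

theorem cycleCost_nonpos_of_nodup (h : ∀ l : List (Fin n), l.Nodup → cycleCost c l ≤ 0)
    (l : List (Fin n)) : cycleCost c l ≤ 0 := by
  induction hlen : l.length using Nat.strong_induction_on generalizing l with
  | _ N ih =>
    by_cases hl : l.Nodup
    · exact h l hl
    obtain ⟨k, a, y, z, hk⟩ := List.exists_rotate_eq_cons_append_cons_of_not_nodup hl
    have hN : N = y.length + z.length + 2 := by
      rw [← hlen, ← List.length_rotate l k, hk]; simp; omega
    rw [← cycleCost_rotate c l k, hk, cycleCost_cons_append_cons]
    exact add_nonpos (ih _ (by simp; omega) _ rfl) (ih _ (by simp; omega) _ rfl)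

theorem cycleCost_eq_sum_formPerm (hc : ∀ i, c i i = 0) {l : List (Fin n)} (hl : l.Nodup) :
    cycleCost c l = ∑ i, c i (l.formPerm i) := by
  have hzip : l.zip (l.rotate 1) = l.map fun i => (i, l.formPerm i) :=
    List.ext_getElem (by simp) fun k _ _ => by
      simp [List.getElem_rotate, List.formPerm_apply_getElem _ hl]
  rw [cycleCost, hzip, List.map_map, ← List.sum_toFinset _ hl]
  refine sum_subset (subset_univ _) fun i _ hi => ?_
  simp [List.formPerm_apply_of_notMem (by simpa using hi), hc]

end Cycles

theorem Finset.sum_piFinset_apply_eq_prod_erase_mul {ι κ R : Type*} [Fintype ι] [DecidableEq ι]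
    [CommSemiring R] (S : ι → Finset κ) (i : ι) (g : κ → R) :
    ∑ f ∈ Fintype.piFinset S, g (f i) = (∏ j ∈ univ.erase i, (#(S j) : R)) * ∑ o ∈ S i, g o := by
  have h := prod_univ_sum S fun j o => if j = i then g o else 1
  simp only [prod_ite_eq', mem_univ, if_true] at h
  rw [← h, ← mul_prod_erase _ _ (mem_univ i), mul_comm]
  congr 1
  · exact prod_congr rfl fun j hj => by simp [ne_of_mem_erase hj]
  · simp

theorem Finset.expect_piFinset_apply {ι κ K : Type*} [Fintype ι] [DecidableEq ι] [Semifield K]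
    [CharZero K] {S : ι → Finset κ} (hS : ∀ j, (S j).Nonempty) (i : ι) (g : κ → K) :
    𝔼 f ∈ Fintype.piFinset S, g (f i) = 𝔼 o ∈ S i, g o := by
  have hcard : ∀ j, (#(S j) : K) ≠ 0 := fun j => Nat.cast_ne_zero.2 (hS j).card_ne_zero
  rw [expect_eq_sum_div_card, expect_eq_sum_div_card, sum_piFinset_apply_eq_prod_erase_mul,
    Fintype.card_piFinset, Nat.cast_prod, ← mul_prod_erase _ _ (mem_univ i)]
  field_simp [prod_ne_zero_iff.2 fun j _ => hcard j, hcard i]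

section Exchange

variable {ι α : Type*}

theorem eq_of_mem_of_pairwise_disjoint {A : ι → Finset α} (hA : Pairwise (Disjoint on A))
    {x : α} {i j : ι} (hi : x ∈ A i) (hj : x ∈ A j) : i = j :=
  by_contra fun h => disjoint_left.1 (hA h) hi hj

theorem injective_of_mem_perm {A : ι → Finset α} {π : Equiv.Perm ι} {f : ι → α}
    (hA : Pairwise (Disjoint on A)) (hf : ∀ i, f i ∈ A (π i)) : Injective f := fun i j h =>
  π.injective (eq_of_mem_of_pairwise_disjoint hA (hf i) (h ▸ hf j))

variable [DecidableEq α]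

def MaximizesWelfare [Fintype ι] (val : ι → α → ℝ) (A : ι → Finset α) : Prop :=
  ∀ B : ι → Finset α, Pairwise (Disjoint on B) → (∀ i, #(B i) = #(A i)) →
    univ.biUnion B = univ.biUnion A → ∑ i, ∑ o ∈ B i, val i o ≤ ∑ i, ∑ o ∈ A i, val i o

/-- Agent `i` takes the item `f i` from the bundle of `π i` and gives up `f (π⁻¹ i)`. -/
def shiftAlong (A : ι → Finset α) (π : Equiv.Perm ι) (f : ι → α) (i : ι) : Finset α :=
  insert (f i) ((A i).erase (f (π.symm i)))

variable {A : ι → Finset α} {π : Equiv.Perm ι} {f : ι → α}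

theorem mem_shiftAlong {x : α} {i : ι} :
    x ∈ shiftAlong A π f i ↔ x = f i ∨ x ≠ f (π.symm i) ∧ x ∈ A i := by
  simp [shiftAlong]

theorem notMem_erase_of_mem_perm (hA : Pairwise (Disjoint on A)) (hf : ∀ i, f i ∈ A (π i))
    (i : ι) : f i ∉ (A i).erase (f (π.symm i)) := by
  intro h
  have hπ : π i = i := eq_of_mem_of_pairwise_disjoint hA (hf i) (mem_of_mem_erase h)
  exact ne_of_mem_erase h (by rw [π.symm_apply_eq.2 hπ.symm])

theorem card_shiftAlong (hA : Pairwise (Disjoint on A)) (hf : ∀ i, f i ∈ A (π i)) (i : ι) :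
    #(shiftAlong A π f i) = #(A i) := by
  have hmem : f (π.symm i) ∈ A i := by simpa using hf (π.symm i)
  rw [shiftAlong, card_insert_of_notMem (notMem_erase_of_mem_perm hA hf i),
    card_erase_add_one hmem]

theorem sum_shiftAlong {M : Type*} [AddCommGroup M] (hA : Pairwise (Disjoint on A))
    (hf : ∀ i, f i ∈ A (π i)) (g : α → M) (i : ι) :
    ∑ o ∈ shiftAlong A π f i, g o = ∑ o ∈ A i, g o + g (f i) - g (f (π.symm i)) := by
  have hmem : f (π.symm i) ∈ A i := by simpa using hf (π.symm i)
  rw [shiftAlong, sum_insert (notMem_erase_of_mem_perm hA hf i), sum_erase_eq_sub hmem]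
  abel

theorem pairwise_disjoint_shiftAlong (hA : Pairwise (Disjoint on A))
    (hf : ∀ i, f i ∈ A (π i)) : Pairwise (Disjoint on shiftAlong A π f) := by
  have hown : ∀ {x i j}, x ∈ A i → x ∈ A j → i = j := eq_of_mem_of_pairwise_disjoint hA
  intro i j hij
  refine disjoint_left.2 fun x hxi hxj => ?_
  rw [mem_shiftAlong] at hxi hxj
  rcases hxi with rfl | ⟨hxi', hxi⟩
  · rcases hxj with hxj | ⟨hxj', hxj⟩
    · exact hij (injective_of_mem_perm hA hf hxj)
    · exact hxj' (by rw [← hown (hf i) hxj, Equiv.symm_apply_apply])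
  · rcases hxj with rfl | ⟨-, hxj⟩
    · exact hxi' (by rw [← hown (hf j) hxi, Equiv.symm_apply_apply])
    · exact hij (hown hxi hxj)

theorem biUnion_shiftAlong [Fintype ι] [DecidableEq ι] (hf : ∀ i, f i ∈ A (π i)) :
    univ.biUnion (shiftAlong A π f) = univ.biUnion A := by
  ext x
  simp only [mem_biUnion, mem_univ, true_and, mem_shiftAlong]
  constructor
  · rintro ⟨i, rfl | ⟨-, hx⟩⟩
    exacts [⟨π i, hf i⟩, ⟨i, hx⟩]
  · rintro ⟨j, hx⟩
    by_cases h : x = f (π.symm j)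
    exacts [⟨π.symm j, .inl h⟩, ⟨j, .inr ⟨h, hx⟩⟩]

theorem MaximizesWelfare.sum_sub_perm_nonpos [Fintype ι] [DecidableEq ι] {val : ι → α → ℝ}
    (hmax : MaximizesWelfare val A) (hA : Pairwise (Disjoint on A))
    (hf : ∀ i, f i ∈ A (π i)) : ∑ i, (val i (f i) - val (π i) (f i)) ≤ 0 := by
  have h := hmax _ (pairwise_disjoint_shiftAlong hA hf) (card_shiftAlong hA hf)
    (biUnion_shiftAlong hf)
  simp only [sum_shiftAlong hA hf] at h
  have hre : ∑ i, val i (f (π.symm i)) = ∑ i, val (π i) (f i) := by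
    simpa using (Equiv.sum_comp π fun i => val i (f (π.symm i))).symm
  rw [sum_sub_distrib, sum_add_distrib, hre] at h
  rw [sum_sub_distrib]
  linarith

theorem MaximizesWelfare.sum_expect_sub_perm_nonpos [Fintype ι] [DecidableEq ι]
    {val : ι → α → ℝ} (hmax : MaximizesWelfare val A)
    (hA : Pairwise (Disjoint on A)) (hne : ∀ i, (A i).Nonempty) (π : Equiv.Perm ι) :
    ∑ i, 𝔼 o ∈ A (π i), (val i o - val (π i) o) ≤ 0 :=
  calc ∑ i, 𝔼 o ∈ A (π i), (val i o - val (π i) o)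
      = 𝔼 f ∈ Fintype.piFinset (fun i => A (π i)), ∑ i, (val i (f i) - val (π i) (f i)) := by
        rw [expect_sum_comm]
        exact sum_congr rfl fun i _ => (expect_piFinset_apply (fun j => hne (π j)) i _).symm
    _ ≤ 𝔼 _f ∈ Fintype.piFinset (fun i => A (π i)), (0 : ℝ) :=
        expect_le_expect fun _f hf =>
          hmax.sum_sub_perm_nonpos hA (Fintype.mem_piFinset.1 hf)
    _ = 0 := expect_const_zero _

end Exchange

section Envy

variable {n m : ℕ} {val : Fin n → Fin m → ℝ} {A : Fin n → Finset (Fin m)}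
  {v : Fin n → Fin n → ℝ}

theorem MaximizesWelfare.sum_envyCost_perm_nonpos (hmax : MaximizesWelfare val A)
    (hA : Pairwise (Disjoint on A)) (hne : ∀ i, (A i).Nonempty)
    (hv : ∀ i j, v i j = ∑ o ∈ A j, val i o) (π : Equiv.Perm (Fin n)) :
    ∑ i, envyCost v (fun i => (#(A i) : ℝ)) i (π i) ≤ 0 := by
  have hterm : ∀ i, 𝔼 o ∈ A (π i), (val i o - val (π i) o)
      = v i (π i) / #(A (π i)) - v (π i) (π i) / #(A (π i)) := fun i => by
    rw [expect_sub_distrib, expect_eq_sum_div_card, expect_eq_sum_div_card, hv, hv]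
  have hre : ∑ i, v (π i) (π i) / #(A (π i)) = ∑ i, v i i / #(A i) :=
    Equiv.sum_comp π fun i => v i i / #(A i)
  calc ∑ i, envyCost v (fun i => (#(A i) : ℝ)) i (π i)
      = ∑ i, 𝔼 o ∈ A (π i), (val i o - val (π i) o) := by
        simp only [envyCost, hterm, sum_sub_distrib, hre]
    _ ≤ 0 := hmax.sum_expect_sub_perm_nonpos hA hne π

theorem MaximizesWelfare.cycleCost_envyCost_nonpos (hmax : MaximizesWelfare val A)
    (hA : Pairwise (Disjoint on A)) (hne : ∀ i, (A i).Nonempty)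
    (hv : ∀ i j, v i j = ∑ o ∈ A j, val i o) (l : List (Fin n)) :
    cycleCost (envyCost v fun i => (#(A i) : ℝ)) l ≤ 0 :=
  cycleCost_nonpos_of_nodup _ (fun l hl => by
    rw [cycleCost_eq_sum_formPerm _ (fun i => sub_self _) hl]
    exact hmax.sum_envyCost_perm_nonpos hA hne hv l.formPerm) l

theorem isWEF_of_envyCost_add_le {w M : Fin n → ℝ} (hw : ∀ i, w i ≠ 0)
    (hM : ∀ i j, envyCost v w i j + M j ≤ M i) : IsWEF v w fun i => w i * M i := by
  intro i j
  have h := hM i j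
  rw [add_div, add_div, mul_div_cancel_left₀ _ (hw i), mul_div_cancel_left₀ _ (hw j)]
  rw [envyCost] at h
  linarith

end Envy

section Potential

variable {n : ℕ} (c : Fin n → Fin n → ℝ)

theorem finite_pathCostsFrom (i : Fin n) : (pathCostsFrom c i).Finite := by
  refine ((List.finite_length_le (Fin n) n).image (pathCost c)).subset ?_
  rintro x ⟨p, -, hp, -, rfl⟩
  exact ⟨p, by simpa using hp.length_le_card, rfl⟩

theorem zero_mem_pathCostsFrom (i : Fin n) : 0 ∈ pathCostsFrom c i :=
  ⟨[i], by simp, by simp, rfl, rfl⟩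

variable {c}

theorem pathCost_cons_le_sSup_pathCostsFrom (hc : ∀ l, cycleCost c l ≤ 0) (i : Fin n)
    {p : List (Fin n)} (hp : p.Nodup) : pathCost c (i :: p) ≤ sSup (pathCostsFrom c i) := by
  have hbdd := (finite_pathCostsFrom c i).bddAbove
  by_cases hi : i ∈ p
  · obtain ⟨q, r, rfl⟩ := List.append_of_mem hi
    have hr : (i :: r).Nodup := hp.of_append_right
    calc pathCost c (i :: (q ++ i :: r)) = cycleCost c (i :: q) + pathCost c (i :: r) := by
          rw [cycleCost_cons, ← pathCost_append_cons]
          rfl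
      _ ≤ 0 + sSup (pathCostsFrom c i) :=
          add_le_add (hc _) (le_csSup hbdd ⟨i :: r, by simp, hr, rfl, rfl⟩)
      _ = sSup (pathCostsFrom c i) := zero_add _
  · exact le_csSup hbdd ⟨i :: p, by simp, List.nodup_cons.2 ⟨hi, hp⟩, rfl, rfl⟩

theorem exists_potential_of_cycleCost_nonpos (hc : ∀ l, cycleCost c l ≤ 0) :
    ∃ M : Fin n → ℝ, (∀ i, 0 ≤ M i) ∧ ∀ i j, c i j + M j ≤ M i := by
  refine ⟨fun i => sSup (pathCostsFrom c i),
    fun i => le_csSup (finite_pathCostsFrom c i).bddAbove (zero_mem_pathCostsFrom c i),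
    fun i j => ?_⟩
  obtain ⟨_ | ⟨k, p⟩, hne, hp, hk, hcost⟩ :=
    Set.Nonempty.csSup_mem ⟨0, zero_mem_pathCostsFrom c j⟩ (finite_pathCostsFrom c j)
  · exact absurd rfl hne
  obtain rfl : k = j := by simpa using hk
  dsimp only
  rw [← hcost, ← pathCost_cons_cons]
  exact pathCost_cons_le_sSup_pathCostsFrom hc i hp

end Potential

/-- Expected-swap argument: if every agent gets exactly wᵢ items and the
allocation maximizes total welfare among all such allocations of the same item
set, then every cycle in the weighted envy graph has nonpositive cost; hence
the allocation is WEF-able. -/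
theorem exact_weights_max_welfare_wefable {n m : ℕ}
    (w : Fin n → ℕ) (hw : ∀ i, 1 ≤ w i)
    (val : Fin n → Fin m → ℝ)
    (A : Fin n → Finset (Fin m))
    (hdisjA : ∀ i j, i ≠ j → Disjoint (A i) (A j))
    (hcardA : ∀ i, (A i).card = w i)
    (hmax : ∀ B : Fin n → Finset (Fin m),
      (∀ i j, i ≠ j → Disjoint (B i) (B j)) →
      (∀ i, (B i).card = w i) →
      (Finset.univ.biUnion B = Finset.univ.biUnion A) →
      ∑ i, ∑ o ∈ B i, val i o ≤ ∑ i, ∑ o ∈ A i, val i o)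
    (v : Fin n → Fin n → ℝ) (hv : ∀ i j, v i j = ∑ o ∈ A j, val i o) :
    (∀ c : List (Fin n), c ≠ [] →
        cycleCost (envyCost v (fun i => (w i : ℝ))) c ≤ 0) ∧
    (∃ s : Fin n → ℝ, (∀ i, 0 ≤ s i) ∧ IsWEF v (fun i => (w i : ℝ)) s) := by
  have hA : Pairwise (Disjoint on A) := fun i j => hdisjA i j
  have hne : ∀ i, (A i).Nonempty := fun i => card_pos.1 (hcardA i ▸ hw i)
  have hmax' : MaximizesWelfare val A := fun B hB hcard =>
    hmax B (fun i j => @hB i j) fun i => (hcard i).trans (hcardA i)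
  have hcyc : ∀ l, cycleCost (envyCost v fun i => (w i : ℝ)) l ≤ 0 := by
    simpa only [hcardA] using hmax'.cycleCost_envyCost_nonpos hA hne hv
  obtain ⟨M, hM0, hM⟩ := exists_potential_of_cycleCost_nonpos hcyc
  refine ⟨fun l _ => hcyc l, fun i => w i * M i, fun i => mul_nonneg (Nat.cast_nonneg _) (hM0 i),
    isWEF_of_envyCost_add_le (fun i => Nat.cast_ne_zero.2 (Nat.one_le_iff_ne_zero.1 (hw i))) hM⟩
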